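/- arXiv:0704.3744 — 8 statements merged into one kernel-verified Lean document; each statement's English description precedes it below -/
import Mathlib

section
/- If a : Fin N → ℝ is a cyclic orthonormal generator in ℝ^N, then for every n ∈ Fin N the point (C_n, S_n) lies on the unit circle, i.e. C_n² + S_n² = 1. -/
/-!
Expanding the squares, `C_n² + S_n² = ∑_{j,k} a_j a_k cos(θ (k - j))` with `θ = 2πn/N`; the phase
`π/4` cancels. Since `θN ∈ 2πℤ`, the cosine depends only on `k - j` in `ℤ/N`, so reindexing by
`s = k - j` turns the double sum into `∑_s (∑_j a_j a_{j+s}) cos(θ s)`, and the cog condition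
leaves only the term `s = 0`, which is `cos 0 = 1`.
-/

open Real Finset

theorem sq_sum_mul_cos_add_sq_sum_mul_sin {ι : Type*} (s : Finset ι) (x φ : ι → ℝ) :
    (∑ j ∈ s, x j * cos (φ j)) ^ 2 + (∑ j ∈ s, x j * sin (φ j)) ^ 2 =
      ∑ j ∈ s, ∑ k ∈ s, x j * x k * cos (φ j - φ k) := by
  simp only [sq, sum_mul_sum, ← sum_add_distrib, cos_sub]
  refine sum_congr rfl fun j _ => sum_congr rfl fun k _ => ?_
  ring

theorem sum_sum_mul_sub_eq_sum_autocorrelation {G R : Type*} [AddCommGroup G] [Fintype G]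
    [CommSemiring R] (a f : G → R) :
    ∑ j, ∑ k, a j * a k * f (k - j) = ∑ s, (∑ j, a j * a (j + s)) * f s := by
  have reindex : ∀ j, ∑ k, a j * a k * f (k - j) = ∑ s, a j * a (j + s) * f s := fun j =>
    (Fintype.sum_equiv (Equiv.addLeft j) _ _ fun s => by simp).symm
  simp only [reindex, sum_mul]
  exact sum_comm

theorem cos_two_pi_mul_div_mul_fin_sub (N : ℕ) [NeZero N] (n : ℕ) (j k : Fin N) :
    cos (2 * π * n / N * ((k - j : Fin N) : ℕ)) = cos (2 * π * n / N * k - 2 * π * n / N * j) := by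
  have hN : (N : ℝ) ≠ 0 := NeZero.ne _
  have hsub : (((k - j : Fin N) : ℕ) : ℝ) = k - j + if j ≤ k then 0 else N := by
    have := Fin.intCast_val_sub_eq_sub_add_ite k j
    split_ifs at this ⊢ <;> exact_mod_cast this
  rw [hsub]
  split_ifs
  · ring_nf
  · -- the wrap-around by `N` shifts the angle by `n` full turns
    rw [← cos_add_nat_mul_two_pi (2 * π * n / N * k - 2 * π * n / N * j) n]
    congr 1
    field_simp

theorem cog_CS_on_unit_circle_general (N : ℕ) [NeZero N] (a : Fin N → ℝ)
    (ha : ∀ s : Fin N, (∑ j : Fin N, a j * a (j + s)) = if s = 0 then 1 else 0) :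
    ∀ n : Fin N,
      (∑ j : Fin N, a j * Real.cos (π / 4 - (2 * π * (n : ℕ) / N) * (j : ℕ))) ^ 2 +
        (∑ j : Fin N, a j * Real.sin (π / 4 - (2 * π * (n : ℕ) / N) * (j : ℕ))) ^ 2 = 1 := by
  intro n
  have phase_diff : ∀ j k : Fin N,
      cos ((π / 4 - 2 * π * (n : ℕ) / N * (j : ℕ)) - (π / 4 - 2 * π * (n : ℕ) / N * (k : ℕ))) =
        cos (2 * π * (n : ℕ) / N * ((k - j : Fin N) : ℕ)) := fun j k => by
    rw [cos_two_pi_mul_div_mul_fin_sub]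
    ring_nf
  rw [sq_sum_mul_cos_add_sq_sum_mul_sin]
  simp only [phase_diff]
  rw [sum_sum_mul_sub_eq_sum_autocorrelation a (fun s => cos (2 * π * (n : ℕ) / N * (s : ℕ)))]
  simp [ha]

theorem cog_CS_on_unit_circle (N : ℕ) (hN : 2 ≤ N) [NeZero N] (a : Fin N → ℝ)
    (ha : ∀ s : Fin N, (∑ j : Fin N, a j * a (j + s)) = if s = 0 then 1 else 0) :
    ∀ n : Fin N,
      (∑ j : Fin N, a j * Real.cos (π / 4 - (2 * π * (n : ℕ) / N) * (j : ℕ))) ^ 2 +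
        (∑ j : Fin N, a j * Real.sin (π / 4 - (2 * π * (n : ℕ) / N) * (j : ℕ))) ^ 2 = 1 :=
  cog_CS_on_unit_circle_general N a ha
end

section
/- If a : Fin N → ℝ is a cyclic orthonormal generator in ℝ^N, then for every n ∈ Fin N the complex number ∑_{j ∈ Fin N} a_j · exp(i(π/4 − (2πn/N)·j)) has absolute value 1. -/
/-!
The summand is `exp(iπ/4) · ψ(j)` for the additive character `ψ(j) = exp(-2πinj/N)` of
`ℤ/N`. Expanding `|∑ aⱼ ψ(j)|²` and substituting `k = j + s` gives
`∑ₛ (∑ⱼ aⱼ aⱼ₊ₛ) ψ(-s)`, which the cog condition collapses to `ψ(0) = 1`.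
-/

open Real Complex

section AddChar

open ComplexConjugate

variable {G K : Type*} [AddCommGroup G] [Fintype G] [RCLike K]

theorem sum_mul_addChar_mul_conj_self (a : G → ℝ) (ψ : AddChar G K) :
    (∑ j, (a j : K) * ψ j) * conj (∑ j, (a j : K) * ψ j) =
      ∑ s, ((∑ j, a j * a (j + s) : ℝ) : K) * ψ (-s) := by
  have hshift (j s : G) : ψ j * conj (ψ (j + s)) = ψ (-s) := by
    rw [← AddChar.map_neg_eq_conj, ← AddChar.map_add_eq_mul, neg_add, add_neg_cancel_left]
  calc (∑ j, (a j : K) * ψ j) * conj (∑ j, (a j : K) * ψ j)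
      = ∑ j, ∑ s, (a j : K) * ψ j * conj ((a (j + s) : K) * ψ (j + s)) := by
        rw [map_sum, Finset.sum_mul_sum]
        exact Finset.sum_congr rfl fun j _ => (Equiv.sum_comp (Equiv.addLeft j) _).symm
    _ = ∑ s, ((∑ j, a j * a (j + s) : ℝ) : K) * ψ (-s) := by
        rw [Finset.sum_comm]
        refine Finset.sum_congr rfl fun s _ => ?_
        push_cast
        rw [Finset.sum_mul]
        refine Finset.sum_congr rfl fun j _ => ?_
        rw [map_mul, RCLike.conj_ofReal, ← hshift j s]
        ring

theorem norm_sum_mul_addChar_eq_one [DecidableEq G] (a : G → ℝ)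
    (ha : ∀ s, ∑ j, a j * a (j + s) = if s = 0 then 1 else 0) (ψ : AddChar G K) :
    ‖∑ j, (a j : K) * ψ j‖ = 1 := by
  have hsq : ((‖∑ j, (a j : K) * ψ j‖ ^ 2 : ℝ) : K) = 1 := by
    push_cast
    rw [← RCLike.mul_conj (K := K), sum_mul_addChar_mul_conj_self]
    simp [ha]
  rw [← pow_eq_one_iff_of_nonneg (norm_nonneg _) two_ne_zero]
  exact_mod_cast hsq

end AddChar

open Fin.CommRing in
theorem ZMod.finEquiv_apply {N : ℕ} [NeZero N] (j : Fin N) :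
    ZMod.finEquiv N j = ((j : ℕ) : ZMod N) := by
  rw [← map_natCast (ZMod.finEquiv N), Fin.cast_val_eq_self]

open Fin.CommRing in
noncomputable def Fin.expAddChar (N : ℕ) [NeZero N] (n : ℕ) : AddChar (Fin N) ℂ :=
  (ZMod.stdAddChar.mulShift (-n : ZMod N)).compAddMonoidHom (ZMod.finEquiv N).toAddMonoidHom

theorem Fin.expAddChar_apply {N : ℕ} [NeZero N] (n : ℕ) (j : Fin N) :
    Fin.expAddChar N n j = Complex.exp (-(2 * π * n / N * (j : ℕ) : ℝ) * I) := by
  have hprod : -(n : ZMod N) * ((j : ℕ) : ZMod N) = ((-(n * (j : ℕ)) : ℤ) : ZMod N) := by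
    push_cast; ring
  change ZMod.stdAddChar (-(n : ZMod N) * ZMod.finEquiv N j) = _
  rw [ZMod.finEquiv_apply, hprod, ZMod.stdAddChar_coe]
  congr 1
  push_cast
  ring

theorem cog_complex_abs_one_general (N : ℕ) [NeZero N] (a : Fin N → ℝ)
    (ha : ∀ s : Fin N, (∑ j : Fin N, a j * a (j + s)) = if s = 0 then 1 else 0) :
    ∀ n : Fin N,
      ‖∑ j : Fin N, (a j : ℂ) *
        Complex.exp (Complex.I * ((Real.pi / 4 - (2 * Real.pi * (n : ℕ) / N) * (j : ℕ) : ℝ) : ℂ))‖ = 1 := by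
  intro n
  have hsplit (j : Fin N) : Complex.exp (Complex.I *
      ((Real.pi / 4 - (2 * Real.pi * (n : ℕ) / N) * (j : ℕ) : ℝ) : ℂ)) =
      Complex.exp ((Real.pi / 4 : ℝ) * Complex.I) * Fin.expAddChar N n j := by
    rw [Fin.expAddChar_apply, ← Complex.exp_add]
    congr 1
    push_cast
    ring
  simp_rw [hsplit, mul_left_comm _ (Complex.exp _), ← Finset.mul_sum, norm_mul,
    Complex.norm_exp_ofReal_mul_I, one_mul]
  exact norm_sum_mul_addChar_eq_one a ha _

theorem cog_complex_abs_one (N : ℕ) (hN : 2 ≤ N) [NeZero N] (a : Fin N → ℝ)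
    (ha : ∀ s : Fin N, (∑ j : Fin N, a j * a (j + s)) = if s = 0 then 1 else 0) :
    ∀ n : Fin N,
      ‖∑ j : Fin N, (a j : ℂ) *
        Complex.exp (Complex.I * ((Real.pi / 4 - (2 * Real.pi * (n : ℕ) / N) * (j : ℕ) : ℝ) : ℂ))‖ = 1 :=
  cog_complex_abs_one_general N a ha
end

section
/- If a : Fin N → ℝ is a cyclic orthonormal generator in ℝ^N, then there exist real numbers θ_0, θ_1, …, θ_{N−1} such that for every k ∈ Fin N, a_k = (√2/N) · ∑_{n ∈ Fin N} cos((2πn/N)·k + θ_n). -/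
/-!
The discrete Fourier transform `A n = ∑ⱼ a j e^{-2πi jn/N}` of a cog has
`|A n|² = ∑ₛ (∑ⱼ a j a (j+s)) e^{2πi ns/N} = 1`, so `A n = e^{iφₙ}`. Fourier inversion then writes
the real number `N a k` as `∑ₙ e^{i(2πnk/N + φₙ)}`; its imaginary part `∑ₙ sin(2πnk/N + φₙ)`
vanishes, and `cos (x + π/4) = (cos x - sin x)/√2` turns the real part into the stated form with
`θₙ = φₙ + π/4`.
-/

open Real

section Autocorrelation

variable {G H : Type*} [AddCommGroup G] [Fintype G] [AddCommGroup H] [Fintype H]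

def autocorrelation (a : G → ℝ) (s : G) : ℝ := ∑ j, a j * a (j + s)

def IsCyclicOrthonormalGenerator [DecidableEq G] (a : G → ℝ) : Prop :=
  ∀ s, autocorrelation a s = if s = 0 then 1 else 0

lemma autocorrelation_comp_addEquiv (e : G ≃+ H) (a : H → ℝ) (s : G) :
    autocorrelation (a ∘ e) s = autocorrelation a (e s) := by
  simp only [autocorrelation, Function.comp_apply, map_add]
  exact e.toEquiv.sum_comp fun j => a j * a (j + e s)

lemma IsCyclicOrthonormalGenerator.comp_addEquiv [DecidableEq G] [DecidableEq H] {a : H → ℝ}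
    (ha : IsCyclicOrthonormalGenerator a) (e : G ≃+ H) : IsCyclicOrthonormalGenerator (a ∘ e) := by
  intro s
  simp [autocorrelation_comp_addEquiv, ha (e s)]

open ComplexConjugate in
lemma AddChar.sum_mul_conj_sum_eq_sum_autocorrelation (a : G → ℝ) (ψ : AddChar G ℂ) :
    (∑ j, (a j : ℂ) * ψ j) * conj (∑ j, (a j : ℂ) * ψ j) =
      ∑ s, (autocorrelation a s : ℂ) * ψ s := by
  calc (∑ j, (a j : ℂ) * ψ j) * conj (∑ j, (a j : ℂ) * ψ j)
      = ∑ l, ∑ j, (a l * a j : ℂ) * ψ (j - l) := by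
        simp only [map_sum, map_mul, Complex.conj_ofReal, ← ψ.map_neg_eq_conj, Finset.sum_mul_sum]
        rw [Finset.sum_comm]
        refine Finset.sum_congr rfl fun l _ => Finset.sum_congr rfl fun j _ => ?_
        rw [sub_eq_add_neg, ψ.map_add_eq_mul]
        ring
    _ = ∑ l, ∑ s, (a l * a (l + s) : ℂ) * ψ s := by
        refine Finset.sum_congr rfl fun l _ => ?_
        exact Fintype.sum_equiv (Equiv.subRight l) _ _ fun j => by simp
    _ = ∑ s, (autocorrelation a s : ℂ) * ψ s := by
        rw [Finset.sum_comm]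
        simp only [autocorrelation, Complex.ofReal_sum, Complex.ofReal_mul, Finset.sum_mul]

lemma IsCyclicOrthonormalGenerator.norm_sum_mul_addChar [DecidableEq G] {a : G → ℝ}
    (ha : IsCyclicOrthonormalGenerator a) (ψ : AddChar G ℂ) : ‖∑ j, (a j : ℂ) * ψ j‖ = 1 := by
  have hδ : ∑ s, (autocorrelation a s : ℂ) * ψ s = 1 := by
    rw [Fintype.sum_eq_single 0 fun s hs => by rw [ha s, if_neg hs, Complex.ofReal_zero, zero_mul],
      ha 0, if_pos rfl, ψ.map_zero_eq_one, Complex.ofReal_one, one_mul]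
  have h := ψ.sum_mul_conj_sum_eq_sum_autocorrelation a
  rw [hδ, Complex.mul_conj] at h
  rw [Complex.norm_def, show Complex.normSq _ = 1 by exact_mod_cast h, Real.sqrt_one]

end Autocorrelation

open Complex in
lemma sqrt_two_mul_sum_cos_add_pi_div_four {ι : Type*} (s : Finset ι) (φ : ι → ℝ) {x : ℝ}
    (h : ∑ i ∈ s, exp (φ i * I) = x) : √2 * ∑ i ∈ s, Real.cos (φ i + π / 4) = x := by
  have hcos : ∑ i ∈ s, Real.cos (φ i) = x := by
    simpa [re_sum, exp_ofReal_mul_I_re] using congrArg re h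
  have hsin : ∑ i ∈ s, Real.sin (φ i) = 0 := by
    simpa [im_sum, exp_ofReal_mul_I_im] using congrArg im h
  have h2 : √2 * √2 = 2 := mul_self_sqrt zero_le_two
  simp only [Real.cos_add, cos_pi_div_four, sin_pi_div_four, ← Finset.sum_mul,
    Finset.sum_sub_distrib, hcos, hsin]
  linear_combination (x / 2) * h2

namespace ZMod

variable {N : ℕ} [NeZero N]

lemma val_finEquiv (n : Fin N) : (finEquiv N n).val = n := by
  cases N with
  | zero => exact (NeZero.ne 0 rfl).elim
  | succ m => rfl

open Complex in
lemma stdAddChar_mul (j k : ZMod N) :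
    stdAddChar (j * k) = exp (2 * π * I * j.val * k.val / N) := by
  have hjk : j * k = ((j.val * k.val : ℕ) : ZMod N) := by simp
  rw [hjk, stdAddChar_apply, toCircle_natCast]
  push_cast
  ring_nf

lemma sum_stdAddChar_mul_dft (Φ : ZMod N → ℂ) (k : ZMod N) :
    ∑ n, stdAddChar (n * k) * 𝓕 Φ n = N * Φ k := by
  have h := congrFun (dft.symm_apply_apply Φ) k
  rw [invDFT_apply, smul_eq_mul, inv_mul_eq_iff_eq_mul₀ (NeZero.ne _)] at h
  simpa using h

lemma IsCyclicOrthonormalGenerator.norm_dft {b : ZMod N → ℝ}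
    (hb : IsCyclicOrthonormalGenerator b) (k : ZMod N) : ‖𝓕 (fun j => (b j : ℂ)) k‖ = 1 := by
  simpa [dft_apply, mul_comm] using hb.norm_sum_mul_addChar (stdAddChar.mulShift (-k))

open Complex in
theorem IsCyclicOrthonormalGenerator.exists_eq_sqrt_two_div_mul_sum_cos {b : ZMod N → ℝ}
    (hb : IsCyclicOrthonormalGenerator b) :
    ∃ θ : ZMod N → ℝ, ∀ k, b k = √2 / N * ∑ n, Real.cos (2 * π * n.val / N * k.val + θ n) := by
  set B : ZMod N → ℂ := fun j => b j
  refine ⟨fun n => arg (𝓕 B n) + π / 4, fun k => ?_⟩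
  have hsum : ∑ n, exp ((2 * π * n.val / N * k.val + arg (𝓕 B n) : ℝ) * I) = (N * b k : ℝ) := by
    push_cast
    rw [← sum_stdAddChar_mul_dft B k]
    refine Finset.sum_congr rfl fun n _ => ?_
    have hpolar := norm_mul_exp_arg_mul_I (𝓕 B n)
    rw [IsCyclicOrthonormalGenerator.norm_dft hb, ofReal_one, one_mul] at hpolar
    rw [stdAddChar_mul]
    conv_rhs => rw [← hpolar, ← Complex.exp_add]
    ring_nf
  have h := sqrt_two_mul_sum_cos_add_pi_div_four _ _ hsum
  simp_rw [← add_assoc]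
  rw [div_mul_eq_mul_div, h, mul_div_cancel_left₀ _ (NeZero.ne (N : ℝ))]

end ZMod

theorem cog_canonical_form_exists_general (N : ℕ) [NeZero N] (a : Fin N → ℝ)
    (ha : ∀ s : Fin N, (∑ j : Fin N, a j * a (j + s)) = if s = 0 then 1 else 0) :
    ∃ θ : Fin N → ℝ, ∀ k : Fin N,
      a k = (Real.sqrt 2 / N) *
        ∑ n : Fin N, Real.cos ((2 * π * (n : ℕ) / N) * (k : ℕ) + θ n) := by
  let e := ZMod.finEquiv N
  have hb : IsCyclicOrthonormalGenerator (a ∘ e.symm) :=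
    IsCyclicOrthonormalGenerator.comp_addEquiv ha e.symm.toAddEquiv
  obtain ⟨θ, hθ⟩ := ZMod.IsCyclicOrthonormalGenerator.exists_eq_sqrt_two_div_mul_sum_cos hb
  refine ⟨θ ∘ e, fun k => ?_⟩
  rw [← e.symm_apply_apply k, ← Function.comp_apply (f := a), hθ, ← e.toEquiv.sum_comp]
  simp only [RingEquiv.toEquiv_eq_coe, EquivLike.coe_coe, RingEquiv.symm_apply_apply,
    Function.comp_apply, e, ZMod.val_finEquiv]

theorem cog_canonical_form_exists (N : ℕ) (hN : 2 ≤ N) [NeZero N] (a : Fin N → ℝ)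
    (ha : ∀ s : Fin N, (∑ j : Fin N, a j * a (j + s)) = if s = 0 then 1 else 0) :
    ∃ θ : Fin N → ℝ, ∀ k : Fin N,
      a k = (Real.sqrt 2 / N) *
        ∑ n : Fin N, Real.cos ((2 * π * (n : ℕ) / N) * (k : ℕ) + θ n) :=
  cog_canonical_form_exists_general N a ha
end

section
/- Let a : Fin N → ℝ be a cyclic orthonormal generator in ℝ^N and let θ : Fin N → ℝ satisfy cos θ_n = C_n and sin θ_n = S_n for every n ∈ Fin N. Then for every k ∈ Fin N, a_k = (√2/N) · ∑_{n ∈ Fin N} cos((2πn/N)·k + θ_n). -/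
/-!
Write `ω = 2π/N`. The hypotheses say `e^{iθₙ} = e^{iπ/4} ∑ⱼ aⱼ e^{-iωnj}`, so
`cos (ωnk + θₙ) = ∑ⱼ aⱼ cos (ω(k - j)n + π/4)`. Summing over `n`, orthogonality of the
characters `n ↦ e^{iω(k - j)n}` of `ℤ/N` kills every term except `j = k`, leaving
`N aₖ cos (π/4) = N aₖ / √2`.
-/

open Real Finset

theorem IsPrimitiveRoot.geom_sum_zpow {K : Type*} [Field K] {ζ : K} {N : ℕ}
    (hζ : IsPrimitiveRoot ζ N) (m : ℤ) :
    ∑ n ∈ range N, (ζ ^ m) ^ n = if (N : ℤ) ∣ m then (N : K) else 0 := by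
  split_ifs with hm
  · simp [(hζ.zpow_eq_one_iff_dvd m).mpr hm]
  · have hpow : (ζ ^ m) ^ N = 1 := by rw [← zpow_natCast, ← zpow_mul, mul_comm, zpow_mul,
      zpow_natCast, hζ.pow_eq_one, one_zpow]
    rw [geom_sum_eq (mt (hζ.zpow_eq_one_iff_dvd m).mp hm), hpow, sub_self, zero_div]

theorem sum_cos_two_pi_int_mul_div_add (N : ℕ) [NeZero N] (m : ℤ) (φ : ℝ) :
    ∑ n : Fin N, cos (2 * π * m * n / N + φ) = if (N : ℤ) ∣ m then N * cos φ else 0 := by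
  set ζ := Complex.exp (2 * π * Complex.I / N)
  have hterm : ∀ n : ℕ, cos (2 * π * m * n / N + φ)
      = (Complex.exp (φ * Complex.I) * (ζ ^ m) ^ n).re := by
    intro n
    rw [← Complex.exp_int_mul, ← Complex.exp_nat_mul, ← Complex.exp_add,
      ← Complex.exp_ofReal_mul_I_re]
    congr 2
    push_cast
    ring
  simp_rw [hterm]
  rw [Fin.sum_univ_eq_sum_range (fun n => (Complex.exp (φ * Complex.I) * (ζ ^ m) ^ n).re),
    ← Complex.re_sum, ← mul_sum, (Complex.isPrimitiveRoot_exp N (NeZero.ne N)).geom_sum_zpow m]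
  split_ifs
  · rw [mul_comm, ← Complex.ofReal_natCast, Complex.re_ofReal_mul, Complex.exp_ofReal_mul_I_re]
  · simp

theorem Fin.natCast_dvd_sub_iff {N : ℕ} (j k : Fin N) : (N : ℤ) ∣ (k : ℤ) - j ↔ j = k := by
  refine ⟨fun h => ?_, fun h => by simp [h]⟩
  have : (k : ℤ) - j = 0 :=
    Int.eq_zero_of_dvd_of_natAbs_lt_natAbs h (by simp only [Int.natAbs_natCast]; omega)
  exact Fin.ext (by omega)

theorem cos_add_eq_sum_of_cos_sin_eq_sum {ι : Type*} (s : Finset ι) (a β : ι → ℝ) {θ : ℝ}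
    (hcos : cos θ = ∑ j ∈ s, a j * cos (β j)) (hsin : sin θ = ∑ j ∈ s, a j * sin (β j))
    (x : ℝ) : cos (x + θ) = ∑ j ∈ s, a j * cos (x + β j) := by
  simp_rw [cos_add, hcos, hsin, mul_sum, ← sum_sub_distrib]
  exact sum_congr rfl fun j _ => by ring

theorem cog_canonical_form_general (N : ℕ) [NeZero N] (a : Fin N → ℝ)
    (θ : Fin N → ℝ)
    (hcos : ∀ n : Fin N, Real.cos (θ n) =
      ∑ j : Fin N, a j * Real.cos (π / 4 - (2 * π * (n : ℕ) / N) * (j : ℕ)))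
    (hsin : ∀ n : Fin N, Real.sin (θ n) =
      ∑ j : Fin N, a j * Real.sin (π / 4 - (2 * π * (n : ℕ) / N) * (j : ℕ))) :
    ∀ k : Fin N,
      a k = (Real.sqrt 2 / N) *
        ∑ n : Fin N, Real.cos ((2 * π * (n : ℕ) / N) * (k : ℕ) + θ n) := by
  intro k
  have hshift : ∀ n : Fin N, cos ((2 * π * (n : ℕ) / N) * (k : ℕ) + θ n)
      = ∑ j : Fin N, a j * cos (2 * π * (((k : ℤ) - j : ℤ) : ℝ) * (n : ℕ) / N + π / 4) := by
    intro n
    rw [cos_add_eq_sum_of_cos_sin_eq_sum _ a _ (hcos n) (hsin n)]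
    exact sum_congr rfl fun j _ => by push_cast; ring_nf
  have hN : (N : ℝ) ≠ 0 := NeZero.ne _
  calc a k = √2 / N * ∑ j : Fin N, a j * (if j = k then N * cos (π / 4) else 0) := by
        simp only [mul_ite, mul_zero, sum_ite_eq', mem_univ, if_true, cos_pi_div_four]
        field_simp
        rw [sq_sqrt zero_le_two]
    _ = _ := by
        simp_rw [hshift, ← Fin.natCast_dvd_sub_iff, ← sum_cos_two_pi_int_mul_div_add, mul_sum]
        rw [sum_comm]

theorem cog_canonical_form (N : ℕ) (hN : 2 ≤ N) [NeZero N] (a : Fin N → ℝ)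
    (ha : ∀ s : Fin N, (∑ j : Fin N, a j * a (j + s)) = if s = 0 then 1 else 0)
    (θ : Fin N → ℝ)
    (hcos : ∀ n : Fin N, Real.cos (θ n) =
      ∑ j : Fin N, a j * Real.cos (π / 4 - (2 * π * (n : ℕ) / N) * (j : ℕ)))
    (hsin : ∀ n : Fin N, Real.sin (θ n) =
      ∑ j : Fin N, a j * Real.sin (π / 4 - (2 * π * (n : ℕ) / N) * (j : ℕ))) :
    ∀ k : Fin N,
      a k = (Real.sqrt 2 / N) *
        ∑ n : Fin N, Real.cos ((2 * π * (n : ℕ) / N) * (k : ℕ) + θ n) :=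
  cog_canonical_form_general N a θ hcos hsin
end

section
/- Let a : Fin N → ℝ be a cyclic orthonormal generator in ℝ^N and let θ : Fin N → ℝ satisfy cos θ_n = C_n and sin θ_n = S_n for every n ∈ Fin N. Then for every n ∈ Fin N with n ≠ 0, cos(θ_n + θ_{−n}) = 0, where −n denotes negation in Fin N. -/
open Real

lemma cog_aux_antisym (N : ℕ) (F : Fin N → Fin N → ℝ) (hF : ∀ j k, F k j = - F j k) :
    (∑ j : Fin N, ∑ k : Fin N, F j k) = 0 := by
  have h1 : (∑ j : Fin N, ∑ k : Fin N, F j k) = ∑ j : Fin N, ∑ k : Fin N, F k j :=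
    Finset.sum_comm
  have h2 : (∑ j : Fin N, ∑ k : Fin N, F k j) = -∑ j : Fin N, ∑ k : Fin N, F j k := by
    rw [Finset.sum_congr rfl fun j _ => Finset.sum_congr rfl fun k _ => hF j k]
    simp
  have := h1.trans h2
  linarith

lemma cog_aux_sum (N : ℕ) (a : Fin N → ℝ) (c : ℝ) :
    (∑ j : Fin N, a j * Real.cos (π/4 - c * (j:ℕ))) *
      (∑ k : Fin N, a k * Real.cos (π/4 + c * (k:ℕ)))
    - (∑ j : Fin N, a j * Real.sin (π/4 - c * (j:ℕ))) *
      (∑ k : Fin N, a k * Real.sin (π/4 + c * (k:ℕ))) = 0 := by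
  rw [Finset.sum_mul_sum, Finset.sum_mul_sum, ← Finset.sum_sub_distrib]
  have step : ∀ j : Fin N,
      (∑ k : Fin N, a j * Real.cos (π/4 - c * (j:ℕ)) * (a k * Real.cos (π/4 + c * (k:ℕ))))
      - (∑ k : Fin N, a j * Real.sin (π/4 - c * (j:ℕ)) * (a k * Real.sin (π/4 + c * (k:ℕ))))
      = ∑ k : Fin N, -(a j * a k * Real.sin (c * (k:ℕ) - c * (j:ℕ))) := by
    intro j
    rw [← Finset.sum_sub_distrib]
    refine Finset.sum_congr rfl fun k _ => ?_
    have h : Real.cos (π/4 - c * (j:ℕ)) * Real.cos (π/4 + c * (k:ℕ))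
        - Real.sin (π/4 - c * (j:ℕ)) * Real.sin (π/4 + c * (k:ℕ))
        = - Real.sin (c * (k:ℕ) - c * (j:ℕ)) := by
      rw [← Real.cos_add, show π/4 - c * (j:ℕ) + (π/4 + c * (k:ℕ))
        = π/2 + (c * (k:ℕ) - c * (j:ℕ)) from by ring]
      simp [Real.cos_add]
    linear_combination a j * a k * h
  rw [Finset.sum_congr rfl fun j _ => step j]
  have := cog_aux_antisym N (fun j k => -(a j * a k * Real.sin (c * (k:ℕ) - c * (j:ℕ))))
    (by
      intro j k
      have : Real.sin (c * (j:ℕ) - c * (k:ℕ)) = - Real.sin (c * (k:ℕ) - c * (j:ℕ)) := by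
        rw [show c * (j:ℕ) - c * (k:ℕ) = -(c * (k:ℕ) - c * (j:ℕ)) from by ring, Real.sin_neg]
      simp only [this]
      ring)
  exact this

theorem cog_cos_theta_add_theta_neg (N : ℕ) (hN : 2 ≤ N) [NeZero N] (a : Fin N → ℝ)
    (ha : ∀ s : Fin N, (∑ j : Fin N, a j * a (j + s)) = if s = 0 then 1 else 0)
    (θ : Fin N → ℝ)
    (hcos : ∀ n : Fin N, Real.cos (θ n) =
      ∑ j : Fin N, a j * Real.cos (π / 4 - (2 * π * (n : ℕ) / N) * (j : ℕ)))
    (hsin : ∀ n : Fin N, Real.sin (θ n) =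
      ∑ j : Fin N, a j * Real.sin (π / 4 - (2 * π * (n : ℕ) / N) * (j : ℕ))) :
    ∀ n : Fin N, n ≠ 0 → Real.cos (θ n + θ (-n)) = 0 := by
  intro n hn
  have hN0 : (N : ℝ) ≠ 0 := Nat.cast_ne_zero.mpr (NeZero.ne N)
  have hval : ((-n : Fin N) : ℕ) = N - (n : ℕ) := by
    rw [Fin.neg_def]
    have h1 : 0 < (n:ℕ) := by
      rcases Nat.eq_zero_or_pos (n:ℕ) with h | h
      · exact absurd (Fin.ext (by simp [h])) hn
      · exact h
    exact Nat.mod_eq_of_lt (by omega)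
  have hcast : (((-n : Fin N) : ℕ) : ℝ) = (N:ℝ) - (n:ℕ) := by
    rw [hval, Nat.cast_sub (le_of_lt n.isLt)]
  have hB : ∀ k : Fin N, π / 4 - (2 * π * ((-n : Fin N) : ℕ) / N) * (k:ℕ)
      = (π/4 + (2 * π * (n:ℕ) / N) * (k:ℕ)) - (k:ℕ) * (2 * π) := by
    intro k
    rw [hcast]
    field_simp
    ring
  have hcosneg : Real.cos (θ (-n)) =
      ∑ k : Fin N, a k * Real.cos (π/4 + (2 * π * (n:ℕ) / N) * (k:ℕ)) := by
    rw [hcos]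
    refine Finset.sum_congr rfl fun k _ => ?_
    congr 1
    rw [hB k, show ((k:ℕ):ℝ) * (2*π) = ((k:ℕ):ℤ) * (2*π) from by push_cast; ring,
      Real.cos_sub_int_mul_two_pi]
  have hsinneg : Real.sin (θ (-n)) =
      ∑ k : Fin N, a k * Real.sin (π/4 + (2 * π * (n:ℕ) / N) * (k:ℕ)) := by
    rw [hsin]
    refine Finset.sum_congr rfl fun k _ => ?_
    congr 1
    rw [hB k, show ((k:ℕ):ℝ) * (2*π) = ((k:ℕ):ℤ) * (2*π) from by push_cast; ring,
      Real.sin_sub_int_mul_two_pi]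
  rw [Real.cos_add, hcos n, hsin n, hcosneg, hsinneg]
  have := cog_aux_sum N a (2 * π * (n:ℕ) / N)
  convert this using 3
end

section
/- If a : Fin N → ℝ is a cyclic orthonormal generator in ℝ^N, then ∑_{j ∈ Fin N} a_j = 1 or ∑_{j ∈ Fin N} a_j = −1. -/
open Real

theorem cog_sum_eq_pm_one (N : ℕ) (hN : 2 ≤ N) [NeZero N] (a : Fin N → ℝ)
    (ha : ∀ s : Fin N, (∑ j : Fin N, a j * a (j + s)) = if s = 0 then 1 else 0) :
    (∑ j : Fin N, a j) = 1 ∨ (∑ j : Fin N, a j) = -1 := by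
  have key : (∑ j : Fin N, a j) * (∑ j : Fin N, a j) = 1 := by
    rw [Finset.sum_mul_sum]
    have h1 : ∀ j : Fin N, (∑ k : Fin N, a j * a k) = ∑ s : Fin N, a j * a (j + s) := by
      intro j
      exact (Fintype.sum_equiv (Equiv.addLeft j) _ _ (fun s => rfl)).symm
    calc (∑ j : Fin N, ∑ k : Fin N, a j * a k)
        = ∑ j : Fin N, ∑ s : Fin N, a j * a (j + s) := Finset.sum_congr rfl (fun j _ => h1 j)
      _ = ∑ s : Fin N, ∑ j : Fin N, a j * a (j + s) := Finset.sum_comm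
      _ = ∑ s : Fin N, if s = 0 then 1 else 0 := Finset.sum_congr rfl (fun s _ => ha s)
      _ = 1 := by simp
  exact mul_self_eq_one_iff.mp key
end

section
/- Let θ : Fin N → ℝ satisfy: θ_0 ≡ π/4 (mod 2π) or θ_0 ≡ 5π/4 (mod 2π), and θ_n + θ_{−n} ≡ π/2 (mod 2π) for every n ∈ Fin N with n ≠ 0 (where −n denotes negation in Fin N). Define a_k = (√2/N) · ∑_{n ∈ Fin N} cos((2πn/N)·k + θ_n) for each k ∈ Fin N. Then a is a cyclic orthonormal generator in ℝ^N, i.e. for every s ∈ Fin N, ∑_{j ∈ Fin N} a_j · a_{j+s} equals 1 when s = 0 and equals 0 otherwise. -/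
/-!
Expanding each cosine into exponentials, `a` has discrete Fourier coefficients
`f n = (√2 / 2N) (e^{iθ_n} + e^{-iθ_{-n}})`. By Wiener–Khinchin the cyclic autocorrelation
of such a signal is `N ∑ₙ f(-n) f(n) ωⁿˢ` with `ω = e^{2πi/N}`, and here
`f(-n) f(n) = (1 + cos (θ_n + θ_{-n})) / N² = 1/N²` for every `n`, because the phase
conditions force `cos (θ_n + θ_{-n}) = 0` (for `n = 0` this is `2θ_0 ≡ π/2 mod 2π`).
A flat spectrum makes the autocorrelation a multiple of the Kronecker delta.
-/

open Real

section RootOfUnity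

variable {M : Type*} [Monoid M] {N : ℕ} {ζ : M}

theorem pow_val_add_mul_of_pow_eq_one (hζ : ζ ^ N = 1) (a b : Fin N) (k : ℕ) :
    ζ ^ ((a + b).val * k) = ζ ^ (a.val * k) * ζ ^ (b.val * k) := by
  rw [Fin.val_add, pow_mul, ← pow_eq_pow_mod _ hζ, ← pow_mul, add_mul, pow_add]

theorem pow_val_neg_mul_mul_pow_val_mul_of_pow_eq_one [NeZero N] (hζ : ζ ^ N = 1) (n : Fin N)
    (k : ℕ) : ζ ^ ((-n).val * k) * ζ ^ (n.val * k) = 1 := by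
  rw [← pow_val_add_mul_of_pow_eq_one hζ, neg_add_cancel, Fin.val_zero, zero_mul, pow_zero]

end RootOfUnity

namespace IsPrimitiveRoot

variable {R : Type*} [CommRing R] [IsDomain R] {N : ℕ} [NeZero N] {ζ : R}

theorem sum_pow_val_mul_val (hζ : IsPrimitiveRoot ζ N) (n : Fin N) :
    ∑ j : Fin N, ζ ^ (n.val * j.val) = if n = 0 then (N : R) else 0 := by
  simp_rw [pow_mul]
  rw [Fin.sum_univ_eq_sum_range (fun j => (ζ ^ n.val) ^ j)]
  split_ifs with hn
  · simp [hn]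
  · have hne : ζ ^ n.val ≠ 1 := fun h =>
      hn (Fin.ext (Nat.eq_zero_of_dvd_of_lt (hζ.pow_eq_one_iff_dvd _ |>.mp h) n.isLt))
    refine eq_zero_of_ne_zero_of_mul_right_eq_zero (sub_ne_zero_of_ne hne) ?_
    rw [geom_sum_mul, ← pow_mul, mul_comm, pow_mul, hζ.pow_eq_one, one_pow, sub_self]

theorem sum_mul_shift_of_eq_sum (hζ : IsPrimitiveRoot ζ N) (f x : Fin N → R)
    (hx : ∀ k, x k = ∑ n : Fin N, ζ ^ (n.val * k.val) * f n) (s : Fin N) :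
    ∑ j : Fin N, x j * x (j + s) = N * ∑ n : Fin N, f (-n) * f n * ζ ^ (n.val * s.val) := by
  have hshift (j m : Fin N) :
      ζ ^ (m.val * (j + s).val) = ζ ^ (m.val * j.val) * ζ ^ (m.val * s.val) := by
    simp_rw [mul_comm m.val]
    exact pow_val_add_mul_of_pow_eq_one hζ.pow_eq_one j s m
  calc ∑ j : Fin N, x j * x (j + s)
      = ∑ n : Fin N, ∑ m : Fin N, f n * f m * ζ ^ (m.val * s.val) *
          ∑ j : Fin N, ζ ^ ((n + m).val * j.val) := by
        simp_rw [hx, Finset.sum_mul_sum, Finset.mul_sum, hshift,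
          pow_val_add_mul_of_pow_eq_one hζ.pow_eq_one]
        rw [Finset.sum_comm]
        refine Finset.sum_congr rfl fun n _ => ?_
        rw [Finset.sum_comm]
        refine Finset.sum_congr rfl fun m _ => Finset.sum_congr rfl fun j _ => ?_
        ring
    _ = ∑ n : Fin N, f n * f (-n) * ζ ^ ((-n).val * s.val) * N := by
        simp_rw [hζ.sum_pow_val_mul_val, add_eq_zero_iff_eq_neg', mul_ite, mul_zero,
          Finset.sum_ite_eq', Finset.mem_univ, if_true]
    _ = N * ∑ n : Fin N, f (-n) * f n * ζ ^ (n.val * s.val) := by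
        rw [Finset.mul_sum]
        refine Fintype.sum_equiv (Equiv.neg (Fin N)) _ _ fun n => ?_
        simp only [Equiv.neg_apply, neg_neg]
        ring

theorem sum_mul_shift_of_mul_neg_eq (hζ : IsPrimitiveRoot ζ N) (f x : Fin N → R)
    (hx : ∀ k, x k = ∑ n : Fin N, ζ ^ (n.val * k.val) * f n) {c : R}
    (hf : ∀ n, f (-n) * f n = c) (s : Fin N) :
    ∑ j : Fin N, x j * x (j + s) = if s = 0 then (N : R) ^ 2 * c else 0 := by
  simp_rw [hζ.sum_mul_shift_of_eq_sum f x hx, hf, ← Finset.mul_sum, mul_comm _ s.val,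
    hζ.sum_pow_val_mul_val]
  split_ifs <;> ring

end IsPrimitiveRoot

theorem cos_eq_zero_of_eq_pi_div_two_add {x : ℝ} (m : ℤ) (hx : x = π / 2 + 2 * π * m) :
    Real.cos x = 0 := by
  rw [hx, mul_comm, Real.cos_add_int_mul_two_pi, Real.cos_pi_div_two]

theorem cos_apply_neg_add_apply_eq_zero {N : ℕ} [NeZero N] {θ : Fin N → ℝ}
    (hθ0 : (∃ m : ℤ, θ 0 = π / 4 + 2 * π * m) ∨ (∃ m : ℤ, θ 0 = 5 * π / 4 + 2 * π * m))
    (hθ : ∀ n : Fin N, n ≠ 0 → ∃ m : ℤ, θ n + θ (-n) = π / 2 + 2 * π * m) (n : Fin N) :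
    Real.cos (θ (-n) + θ n) = 0 := by
  by_cases hn : n = 0
  · subst hn
    rw [neg_zero]
    rcases hθ0 with ⟨m, hm⟩ | ⟨m, hm⟩
    · exact cos_eq_zero_of_eq_pi_div_two_add (2 * m) (by rw [hm]; push_cast; ring)
    · exact cos_eq_zero_of_eq_pi_div_two_add (2 * m + 1) (by rw [hm]; push_cast; ring)
  · obtain ⟨m, hm⟩ := hθ n hn
    exact cos_eq_zero_of_eq_pi_div_two_add m (by rw [add_comm, hm])

section Fourier

open Complex

variable {N : ℕ}

theorem ofReal_cos_two_pi_mul_add [NeZero N] (n k : Fin N) (φ : ℝ) :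
    (Real.cos (2 * π * n.val / N * k.val + φ) : ℂ) =
      (exp (2 * π * I / N) ^ (n.val * k.val) * exp (φ * I) +
        exp (2 * π * I / N) ^ ((-n).val * k.val) * exp (-(φ * I))) / 2 := by
  have hpow : exp (2 * π * I / N) ^ (n.val * k.val) =
      exp ((2 * π * n.val / N * k.val : ℝ) * I) := by
    rw [← Complex.exp_nat_mul]
    push_cast
    ring_nf
  have hinv : exp (2 * π * I / N) ^ ((-n).val * k.val) =
      exp (-((2 * π * n.val / N * k.val : ℝ) * I)) := by
    rw [Complex.exp_neg, ← hpow]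
    exact eq_inv_of_mul_eq_one_left
      (pow_val_neg_mul_mul_pow_val_mul_of_pow_eq_one
        (isPrimitiveRoot_exp N (NeZero.ne N)).pow_eq_one n k.val)
  rw [hpow, hinv, ← Complex.exp_add, ← Complex.exp_add, ofReal_cos, Complex.cos]
  push_cast
  ring_nf

noncomputable def cosFourierCoeff (θ : Fin N → ℝ) (n : Fin N) : ℂ :=
  (exp (θ n * I) + exp (-(θ (-n) * I))) / 2

theorem ofReal_sum_cos_two_pi_mul_add [NeZero N] (θ : Fin N → ℝ) (k : Fin N) :
    ((∑ n : Fin N, Real.cos (2 * π * n.val / N * k.val + θ n) : ℝ) : ℂ) =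
      ∑ n : Fin N, exp (2 * π * I / N) ^ (n.val * k.val) * cosFourierCoeff θ n := by
  have hneg : ∑ n : Fin N, exp (2 * π * I / N) ^ ((-n).val * k.val) * exp (-(θ n * I)) =
      ∑ n : Fin N, exp (2 * π * I / N) ^ (n.val * k.val) * exp (-(θ (-n) * I)) :=
    Fintype.sum_equiv (Equiv.neg (Fin N)) _ _ fun n => by rw [Equiv.neg_apply, neg_neg]
  simp_rw [cosFourierCoeff, ofReal_sum, ofReal_cos_two_pi_mul_add, ← Finset.sum_div,
    Finset.sum_add_distrib, hneg, ← Finset.sum_add_distrib, Finset.sum_div, mul_div_assoc',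
    mul_add]

theorem cosFourierCoeff_neg_mul_cosFourierCoeff (θ : Fin N → ℝ) (n : Fin N) :
    cosFourierCoeff θ (-n) * cosFourierCoeff θ n = (1 + Real.cos (θ (-n) + θ n)) / 2 := by
  rw [cosFourierCoeff, cosFourierCoeff, neg_neg, ofReal_cos, ofReal_add, Complex.cos]
  simp only [div_mul_div_comm, mul_add, add_mul, ← Complex.exp_add]
  ring_nf
  simp only [Complex.exp_zero]
  ring

end Fourier

theorem canonical_form_is_cog_general (N : ℕ) [NeZero N] (θ : Fin N → ℝ)
    (hθ0 : (∃ m : ℤ, θ 0 = π / 4 + 2 * π * m) ∨ (∃ m : ℤ, θ 0 = 5 * π / 4 + 2 * π * m))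
    (hθ : ∀ n : Fin N, n ≠ 0 → ∃ m : ℤ, θ n + θ (-n) = π / 2 + 2 * π * m)
    (a : Fin N → ℝ)
    (hdef : ∀ k : Fin N,
      a k = (Real.sqrt 2 / N) *
        ∑ n : Fin N, Real.cos ((2 * π * (n : ℕ) / N) * (k : ℕ) + θ n)) :
    ∀ s : Fin N, (∑ j : Fin N, a j * a (j + s)) = if s = 0 then 1 else 0 := by
  intro s
  set f : Fin N → ℂ := fun n => (√2 / N : ℝ) * cosFourierCoeff θ n
  have ha (k : Fin N) : (a k : ℂ) =
      ∑ n : Fin N, Complex.exp (2 * π * Complex.I / N) ^ (n.val * k.val) * f n := by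
    rw [hdef, Complex.ofReal_mul, ofReal_sum_cos_two_pi_mul_add, Finset.mul_sum]
    exact Finset.sum_congr rfl fun n _ => by ring
  have hN : (N : ℂ) ≠ 0 := Nat.cast_ne_zero.mpr (NeZero.ne N)
  have hf (n : Fin N) : f (-n) * f n = 1 / (N : ℂ) ^ 2 := by
    rw [mul_mul_mul_comm, cosFourierCoeff_neg_mul_cosFourierCoeff,
      cos_apply_neg_add_apply_eq_zero hθ0 hθ n, ← Complex.ofReal_mul, ← sq, div_pow,
      sq_sqrt zero_le_two]
    field_simp
    norm_num
  apply Complex.ofReal_injective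
  push_cast
  rw [(Complex.isPrimitiveRoot_exp N (NeZero.ne N)).sum_mul_shift_of_mul_neg_eq f _ ha hf]
  split_ifs <;> simp [hN]

theorem canonical_form_is_cog (N : ℕ) (hN : 2 ≤ N) [NeZero N] (θ : Fin N → ℝ)
    (hθ0 : (∃ m : ℤ, θ 0 = π / 4 + 2 * π * m) ∨ (∃ m : ℤ, θ 0 = 5 * π / 4 + 2 * π * m))
    (hθ : ∀ n : Fin N, n ≠ 0 → ∃ m : ℤ, θ n + θ (-n) = π / 2 + 2 * π * m)
    (a : Fin N → ℝ)
    (hdef : ∀ k : Fin N,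
      a k = (Real.sqrt 2 / N) *
        ∑ n : Fin N, Real.cos ((2 * π * (n : ℕ) / N) * (k : ℕ) + θ n)) :
    ∀ s : Fin N, (∑ j : Fin N, a j * a (j + s)) = if s = 0 then 1 else 0 :=
  canonical_form_is_cog_general N θ hθ0 hθ a hdef
end

section
/- If a : Fin N → ℝ is a cyclic orthonormal generator in ℝ^N, then there exists a representation θ : Fin N → ℝ of a such that θ_0 ≡ π/4 (mod 2π) or θ_0 ≡ 5π/4 (mod 2π), and θ_n + θ_{−n} ≡ π/2 (mod 2π) for every n ∈ Fin N with n ≠ 0 (where −n denotes negation in Fin N). -/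
/-!
Let `c` be the discrete Fourier transform of `a`. Orthonormality of the cyclic translates of `a`
says exactly that `c n * c (-n) = 1`, and as `a` is real, `c (-n) = conj (c n)`; so every `c n`
lies on the unit circle, `c n = exp (i φₙ)`. The imaginary part of Fourier inversion
`N aₖ = ∑ₙ exp (i (2πnk/N + φₙ))` vanishes, and `cos (x + π/4) = (cos x - sin x) / √2` turns
the real part into the cosine representation with `θₙ = φₙ + π/4`. Finally `c 0 = ±1` gives
`φ₀ ∈ {0, π}`, and `φ₋ₙ = arg (conj (c n)) ≡ -φₙ`.
-/

open Real ComplexConjugate Fin.CommRing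

/-- The cog condition, on an arbitrary finite additive group. -/
def HasOrthonormalTranslates {G : Type*} [AddGroup G] [Fintype G] [DecidableEq G]
    (a : G → ℝ) : Prop :=
  ∀ s : G, ∑ j, a j * a (j + s) = if s = 0 then 1 else 0

namespace AddChar

section DFT

variable {R : Type*} [CommRing R] [Fintype R] (ψ : AddChar R ℂ) (a : R → ℝ)

noncomputable def dft (n : R) : ℂ := ∑ k, (a k : ℂ) * ψ (-(n * k))

lemma conj_dft (n : R) : conj (dft ψ a n) = dft ψ a (-n) := by
  simp only [dft, map_sum, map_mul, Complex.conj_ofReal, ← map_neg_eq_conj, neg_mul, neg_neg]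

lemma dft_mul_dft_neg [DecidableEq R] (ha : HasOrthonormalTranslates a) (n : R) :
    dft ψ a n * dft ψ a (-n) = 1 := by
  calc dft ψ a n * dft ψ a (-n)
      = ∑ j, ∑ s, ((a j * a (j + s) : ℝ) : ℂ) * ψ (n * s) := by
        rw [dft, dft, Finset.sum_mul_sum]
        refine Finset.sum_congr rfl fun j _ => ?_
        rw [← Equiv.sum_comp (Equiv.addLeft j)]
        refine Finset.sum_congr rfl fun s _ => ?_
        have hψ : ψ (-(n * j)) * ψ (-(-n * (j + s))) = ψ (n * s) := by
          rw [← map_add_eq_mul]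
          ring_nf
        simp only [Equiv.coe_addLeft, Complex.ofReal_mul, ← hψ]
        ring
    _ = ∑ s, ((if s = 0 then 1 else 0 : ℝ) : ℂ) * ψ (n * s) := by
        simp only [Finset.sum_comm (γ := R), ← Finset.sum_mul, ← Complex.ofReal_sum, ha _]
    _ = 1 := by
        rw [Fintype.sum_eq_single 0 fun s hs => by simp [hs]]
        simp

lemma norm_dft [DecidableEq R] (ha : HasOrthonormalTranslates a) (n : R) :
    ‖dft ψ a n‖ = 1 := by
  have h := dft_mul_dft_neg ψ a ha n
  rw [← conj_dft, Complex.mul_conj, ← Complex.ofReal_one, Complex.ofReal_inj,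
    Complex.normSq_eq_norm_sq] at h
  exact (pow_eq_one_iff_of_nonneg (norm_nonneg _) two_ne_zero).mp h

lemma sum_dft_mul [DecidableEq R] (hψ : ψ.IsPrimitive) (k : R) :
    ∑ n, dft ψ a n * ψ (n * k) = Fintype.card R * a k := by
  calc ∑ n, dft ψ a n * ψ (n * k)
      = ∑ j, (a j : ℂ) * ∑ n, ψ (n * (k - j)) := by
        simp only [dft, Finset.sum_mul, Finset.mul_sum]
        rw [Finset.sum_comm]
        refine Finset.sum_congr rfl fun j _ => Finset.sum_congr rfl fun n _ => ?_
        rw [mul_assoc, ← map_add_eq_mul]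
        ring_nf
    _ = Fintype.card R * a k := by
        simp [sum_mulShift _ hψ, sub_eq_zero, mul_comm]

end DFT

section FinChar

variable {C : Type*} [CommMonoid C] (N : ℕ) [NeZero N] {ζ : C}

def finChar (hζ : ζ ^ N = 1) : AddChar (Fin N) C where
  toFun a := ζ ^ (a : ℕ)
  map_zero_eq_one' := by simp
  map_add_eq_mul' x y := by simp only [Fin.val_add, ← pow_eq_pow_mod _ hζ, ← pow_add]

lemma finChar_mul_apply (hζ : ζ ^ N = 1) (n k : Fin N) :
    finChar N hζ (n * k) = ζ ^ ((n : ℕ) * k) := by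
  simp [finChar, Fin.val_mul, ← pow_eq_pow_mod _ hζ]

lemma finChar_isPrimitive (hζ : IsPrimitiveRoot ζ N) :
    (finChar N hζ.pow_eq_one).IsPrimitive := by
  intro n hn h
  have h1 := congr($h 1)
  simp only [mulShift_apply, mul_one, one_apply] at h1
  exact hn (Fin.ext (hζ.pow_inj n.isLt (NeZero.pos N) (by simpa [finChar] using h1)))

end FinChar

end AddChar

namespace Fin

variable (N : ℕ) [NeZero N]

noncomputable def stdAddChar : AddChar (Fin N) ℂ :=
  AddChar.finChar N (Complex.isPrimitiveRoot_exp N (NeZero.ne N)).pow_eq_one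

lemma isPrimitive_stdAddChar : (stdAddChar N).IsPrimitive :=
  AddChar.finChar_isPrimitive N (Complex.isPrimitiveRoot_exp N (NeZero.ne N))

lemma stdAddChar_mul_apply (n k : Fin N) :
    stdAddChar N (n * k) =
      Complex.exp ((2 * π * (n : ℕ) / N * (k : ℕ) : ℝ) * Complex.I) := by
  rw [stdAddChar, AddChar.finChar_mul_apply, ← Complex.exp_nat_mul]
  push_cast
  ring_nf

end Fin

lemma sum_cos_add_pi_div_four {ι : Type*} [Fintype ι] (x : ι → ℝ) (r : ℝ)
    (h : ∑ i, Complex.exp (x i * Complex.I) = r) : ∑ i, cos (x i + π / 4) = r / √2 := by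
  have hcos : ∑ i, cos (x i) = r := by
    simpa [Complex.re_sum, Complex.exp_ofReal_mul_I_re] using congr(($h).re)
  have hsin : ∑ i, sin (x i) = 0 := by
    simpa [Complex.im_sum, Complex.exp_ofReal_mul_I_im] using congr(($h).im)
  calc ∑ i, cos (x i + π / 4) = (∑ i, cos (x i) - ∑ i, sin (x i)) * (√2 / 2) := by
        simp only [cos_add, cos_pi_div_four, sin_pi_div_four, ← Finset.sum_sub_distrib,
          Finset.sum_mul, sub_mul]
    _ = r / √2 := by rw [hcos, hsin, sub_zero, sqrt_div_self', mul_one_div]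

lemma Complex.exists_arg_add_arg_conj (z : ℂ) :
    ∃ m : ℤ, arg z + arg (conj z) = 2 * π * m := by
  have h : ((arg z + arg (conj z) : ℝ) : Real.Angle) = 0 := by
    rw [Real.Angle.coe_add, arg_conj_coe_angle, add_neg_cancel]
  obtain ⟨m, hm⟩ := Real.Angle.coe_eq_zero_iff.mp h
  exact ⟨m, by rw [← hm, zsmul_eq_mul, mul_comm]⟩

theorem cog_has_canonical_representation_general (N : ℕ) [NeZero N] (a : Fin N → ℝ)
    (ha : ∀ s : Fin N, (∑ j : Fin N, a j * a (j + s)) = if s = 0 then 1 else 0) :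
    ∃ θ : Fin N → ℝ,
      (∀ k : Fin N,
        a k = (Real.sqrt 2 / N) *
          ∑ n : Fin N, Real.cos ((2 * π * (n : ℕ) / N) * (k : ℕ) + θ n)) ∧
      ((∃ m : ℤ, θ 0 = π / 4 + 2 * π * m) ∨ (∃ m : ℤ, θ 0 = 5 * π / 4 + 2 * π * m)) ∧
      (∀ n : Fin N, n ≠ 0 → ∃ m : ℤ, θ n + θ (-n) = π / 2 + 2 * π * m) := by
  set c := (Fin.stdAddChar N).dft a with hc
  have hphase (n k : Fin N) : c n * Fin.stdAddChar N (n * k) =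
      Complex.exp ((2 * π * (n : ℕ) / N * (k : ℕ) + (c n).arg : ℝ) * Complex.I) := by
    conv_lhs => rw [← Complex.norm_mul_exp_arg_mul_I (c n), AddChar.norm_dft _ _ ha]
    rw [Fin.stdAddChar_mul_apply, Complex.ofReal_one, one_mul, ← Complex.exp_add]
    push_cast
    ring_nf
  have hc0 : c 0 * c 0 = 1 := by simpa using (Fin.stdAddChar N).dft_mul_dft_neg a ha 0
  refine ⟨fun n => (c n).arg + π / 4, fun k => ?_, ?_, fun n _ => ?_⟩
  · have hsum := (Fin.stdAddChar N).sum_dft_mul a (Fin.isPrimitive_stdAddChar N) k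
    simp only [← hc, hphase, Fintype.card_fin] at hsum
    have hN : (N : ℝ) ≠ 0 := Nat.cast_ne_zero.mpr (NeZero.ne N)
    simp only [← add_assoc, sum_cos_add_pi_div_four _ (N * a k) (mod_cast hsum)]
    field_simp
  · rcases mul_self_eq_one_iff.mp hc0 with h | h
    · exact .inl ⟨0, by simp [h]⟩
    · exact .inr ⟨0, by simp [h, Complex.arg_neg_one]; ring⟩
  · obtain ⟨m, hm⟩ := Complex.exists_arg_add_arg_conj (c n)
    rw [hc, AddChar.conj_dft] at hm
    exact ⟨m, by linarith⟩

theorem cog_has_canonical_representation (N : ℕ) (hN : 2 ≤ N) [NeZero N] (a : Fin N → ℝ)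
    (ha : ∀ s : Fin N, (∑ j : Fin N, a j * a (j + s)) = if s = 0 then 1 else 0) :
    ∃ θ : Fin N → ℝ,
      (∀ k : Fin N,
        a k = (Real.sqrt 2 / N) *
          ∑ n : Fin N, Real.cos ((2 * π * (n : ℕ) / N) * (k : ℕ) + θ n)) ∧
      ((∃ m : ℤ, θ 0 = π / 4 + 2 * π * m) ∨ (∃ m : ℤ, θ 0 = 5 * π / 4 + 2 * π * m)) ∧
      (∀ n : Fin N, n ≠ 0 → ∃ m : ℤ, θ n + θ (-n) = π / 2 + 2 * π * m) :=
  cog_has_canonical_representation_general N a ha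
end
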